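/- Define arrays by the explicit formulas: E^k_{αβ} = −(1/2) h^{ki} (DA_{α,iβ} + DA_{β,iα} − 2 A_{iμ} Γ^μ_{αβ}); F^μ_{αi} = (1/2) g̃^{βμ} ( −(DA_{α,iβ} − DA_{β,iα}) + h^{jk} A_{kβ} (Dh_{α,ij} − A_{lα} ε_{ijl}) ); B^k_{αi} = (1/2) h̃^{jk} ( g^{μβ} A_{jμ} (DA_{α,iβ} − DA_{β,iα}) + A_{lα} ε_{ijl} − Dh_{α,ij} ); D^μ_{ij} = (1/2) g̃^{μα} ( Dh_{α,ij} − A_{kα} h^{mk} (h_{ni} ε_{jmn} + h_{nj} ε_{imn}) ); H^l_{ik} = (1/2) h̃^{jl} ( h_{ni} ε_{kjn} + h_{nk} ε_{ijn} − A_{jμ} g^{μα} Dh_{α,ik} ) − (1/2) ε_{lik}; Γ^σ_{μν} = Γ̃^σ_{μν} + (1/2) g̃^{σρ} ( A_{μi}(C_{ν,ρ}{}^i − C_{ρ,ν}{}^i) + A_{νi}(C_{μ,ρ}{}^i − C_{ρ,μ}{}^i) − A_{iμ} A_{jν} h^{ik} h^{jl} Dh_{ρ,kl} ), where C_{α,β}{}^i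 := h^{ij} DA_{α,jβ} − A_{jβ} h^{ik} h^{jl} Dh_{α,kl}. Then these arrays satisfy the torsion-free symmetry conditions (Γ^μ_{αβ} = Γ^μ_{βα}, D^μ_{ij} = D^μ_{ji}, E^i_{αβ} = E^i_{βα}, H^i_{jk} − H^i_{kj} + ε_{ijk} = 0) and all six metric-compatibility equations. -/
import Mathlib


noncomputable section

/-- The totally antisymmetric Levi-Civita symbol on three indices with ε₀₁₂ = 1
(indices written 1,2,3 in the paper). -/
def eps (i j k : Fin 3) : ℝ :=
  ((((i : ℤ) - (j : ℤ)) * ((j : ℤ) - (k : ℤ)) * ((k : ℤ) - (i : ℤ))) / 2 : ℤ)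

lemma eps_swap23 (i j k : Fin 3) : eps i j k = -eps i k j := by
  fin_cases i <;> fin_cases j <;> fin_cases k <;> norm_num [eps]

lemma eps_cyclic (i j k : Fin 3) : eps i j k = eps k i j := by
  fin_cases i <;> fin_cases j <;> fin_cases k <;> norm_num [eps]

lemma eps_swap12 (i j k : Fin 3) : eps i j k = -eps j i k := by
  fin_cases i <;> fin_cases j <;> fin_cases k <;> norm_num [eps]

lemma sum_comm₃ {α β γ : Type*} [Fintype α] [Fintype β] [Fintype γ] (f : α → β → γ → ℝ) :
    ∑ a, ∑ b, ∑ c, f a b c = ∑ b, ∑ c, ∑ a, f a b c := by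
  rw [Finset.sum_comm]
  exact Finset.sum_congr rfl fun b _ => Finset.sum_comm

lemma sum_comm₄ {α β γ δ : Type*} [Fintype α] [Fintype β] [Fintype γ] [Fintype δ]
    (f : α → β → γ → δ → ℝ) :
    ∑ a, ∑ b, ∑ c, ∑ d, f a b c d = ∑ b, ∑ c, ∑ d, ∑ a, f a b c d := by
  rw [Finset.sum_comm]
  exact Finset.sum_congr rfl fun b _ => sum_comm₃ (fun a c d => f a b c d)

lemma contract_right {ι : Type*} [Fintype ι] [DecidableEq ι] {M Mi : ι → ι → ℝ}
    (hM : ∀ a b, ∑ c, M a c * Mi c b = if a = b then 1 else 0) (v : ι → ℝ) (a : ι) :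
    ∑ b, (∑ c, M a c * Mi c b) * v b = v a := by
  simp only [hM, ite_mul, one_mul, zero_mul, Finset.sum_ite_eq, Finset.mem_univ, if_pos]
section Mat
open Matrix
set_option linter.unusedSectionVars false
set_option linter.unusedVariables false
variable {N K : Type*} [Fintype N] [Fintype K] [DecidableEq N] [DecidableEq K]

lemma inv_symm (M Mi : Matrix N N ℝ) (h1 : M * Mi = 1) (h2 : Mi * M = 1)
    (hs : Mᵀ = M) : Miᵀ = Mi := by
  calc Miᵀ = Miᵀ * (M * Mi) := by rw [h1, Matrix.mul_one]
    _ = (Miᵀ * Mᵀ) * Mi := by rw [hs, Matrix.mul_assoc]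
    _ = (M * Mi)ᵀ * Mi := by rw [Matrix.transpose_mul]
    _ = Mi := by rw [h1]; simp

variable (G Gi Gt Gti : Matrix N N ℝ) (Hm Hi Ht : Matrix K K ℝ) (A : Matrix K N ℝ)

section helpers
variable (h1 : G * Gi = 1) (h2 : Gi * G = 1) (h3 : Hm * Hi = 1) (h4 : Hi * Hm = 1)
  (h5 : Gt * Gti = 1) (h6 : Gti * Gt = 1)
  (hG : G = Gt + Aᵀ * Hi * A)
  (hHt : Ht = Hi + Hi * A * Gti * Aᵀ * Hi)

include h5 in
lemma cGtGti : ∀ {L : Type*} (Z : Matrix N L ℝ), Gt * (Gti * Z) = Z := fun Z => by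
  rw [← Matrix.mul_assoc, h5, Matrix.one_mul]

include h6 in
lemma cGtiGt : ∀ {L : Type*} (Z : Matrix N L ℝ), Gti * (Gt * Z) = Z := fun Z => by
  rw [← Matrix.mul_assoc, h6, Matrix.one_mul]

include h1 in
lemma cGGi : ∀ {L : Type*} (Z : Matrix N L ℝ), G * (Gi * Z) = Z := fun Z => by
  rw [← Matrix.mul_assoc, h1, Matrix.one_mul]

include h2 in
lemma cGiG : ∀ {L : Type*} (Z : Matrix N L ℝ), Gi * (G * Z) = Z := fun Z => by
  rw [← Matrix.mul_assoc, h2, Matrix.one_mul]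

include h3 in
lemma cHmHi : ∀ {L : Type*} (Z : Matrix K L ℝ), Hm * (Hi * Z) = Z := fun Z => by
  rw [← Matrix.mul_assoc, h3, Matrix.one_mul]

include h4 in
lemma cHiHm : ∀ {L : Type*} (Z : Matrix K L ℝ), Hi * (Hm * Z) = Z := fun Z => by
  rw [← Matrix.mul_assoc, h4, Matrix.one_mul]

include h5 hG hHt in
lemma auxI0 : Aᵀ * Ht = G * Gti * Aᵀ * Hi := by
  rw [hHt, hG]
  simp only [Matrix.mul_add, Matrix.add_mul, Matrix.mul_assoc, cGtGti Gt Gti h5, h5,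
    Matrix.mul_one, Matrix.one_mul]

include h2 h5 hG hHt in
lemma auxI1 : Gi * Aᵀ * Ht = Gti * Aᵀ * Hi := by
  rw [Matrix.mul_assoc, auxI0 (G := G) (Gt := Gt) (Gti := Gti) (Hi := Hi) (Ht := Ht)
    (A := A) h5 hG hHt]
  simp only [Matrix.mul_assoc, cGiG G Gi h2]

include h1 h5 h6 hG hHt in
lemma auxI3 : G * Gti = 1 + Aᵀ * Ht * A * Gi := by
  have hA : Aᵀ * Hi * A = G - Gt := by rw [hG]; abel
  symm
  calc 1 + Aᵀ * Ht * A * Gi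
      = 1 + (G * Gti) * ((Aᵀ * Hi * A) * Gi) := by
        rw [auxI0 (G := G) (Gt := Gt) (Gti := Gti) (Hi := Hi) (Ht := Ht) (A := A) h5 hG hHt]
        simp only [Matrix.mul_assoc]
    _ = 1 + (G * Gti) * (G * Gi) - G * Gi := by
        rw [hA]
        simp only [Matrix.sub_mul, Matrix.mul_sub, Matrix.mul_assoc, cGtiGt Gt Gti h6]
        abel
    _ = G * Gti := by rw [h1, Matrix.mul_one]; abel

include h3 hHt in
lemma auxI4 : Hm * Ht = 1 + A * Gti * Aᵀ * Hi := by
  rw [hHt]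
  simp only [Matrix.mul_add, Matrix.mul_assoc, cHmHi Hm Hi h3, h3, Matrix.mul_one,
    Matrix.one_mul]

include h1 h3 h6 hG hHt in
lemma auxI6 : Hm * Ht * A * Gi = A * Gti := by
  have hA : Aᵀ * Hi * A = G - Gt := by rw [hG]; abel
  rw [auxI4 (Gti := Gti) (Hm := Hm) (Hi := Hi) (Ht := Ht) (A := A) h3 hHt]
  calc (1 + A * Gti * Aᵀ * Hi) * A * Gi
      = A * Gi + (A * Gti) * ((Aᵀ * Hi * A) * Gi) := by
        simp only [Matrix.add_mul, Matrix.one_mul, Matrix.mul_assoc]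
    _ = A * Gi + (A * Gti) * (G * Gi) - A * Gi := by
        rw [hA]
        simp only [Matrix.sub_mul, Matrix.mul_sub, Matrix.mul_assoc, cGtiGt Gt Gti h6]
        abel
    _ = A * Gti := by rw [h1, Matrix.mul_one]; abel

include h6 hG hHt in
lemma key2M (W : Matrix K N ℝ) (X : Matrix K K ℝ) :
    W + (-W + X * (Hi * A)) * (Gti * G) + W * (Gti * (Aᵀ * Hi)) * A - X * (Ht * A) = 0 := by
  rw [hHt, hG]
  simp only [Matrix.mul_add, Matrix.add_mul, Matrix.mul_sub, Matrix.sub_mul,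
    Matrix.neg_mul, Matrix.mul_assoc, cGtiGt Gt Gti h6, h6, Matrix.mul_one, Matrix.one_mul]
  abel

include h4 hHt in
lemma key4M (W : Matrix K N ℝ) (X : Matrix K K ℝ) :
    (-W + X * (Hi * A)) * (Gti * Aᵀ) + W * (Gti * (Aᵀ * Hi)) * Hm - X * (Ht * Hm) = -X := by
  rw [hHt]
  simp only [Matrix.mul_add, Matrix.add_mul, Matrix.mul_sub, Matrix.sub_mul,
    Matrix.neg_mul, Matrix.mul_assoc, cHiHm Hm Hi h4, h4, Matrix.mul_one, Matrix.one_mul]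
  abel

include h1 h5 h6 hG hHt in
lemma eq5M (d : N → ℝ) (p : K → ℝ) :
    (G * Gti) *ᵥ (d - (Aᵀ * Hi) *ᵥ p) + (Aᵀ * Ht) *ᵥ p - (Aᵀ * Ht * A * Gi) *ᵥ d = d := by
  have e1 : (G * Gti) *ᵥ d - (Aᵀ * Ht * A * Gi) *ᵥ d = d := by
    rw [auxI3 (G := G) (Gi := Gi) (Gt := Gt) (Gti := Gti) (Hi := Hi) (Ht := Ht) (A := A)
      h1 h5 h6 hG hHt]
    simp only [Matrix.add_mulVec, Matrix.one_mulVec]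
    abel
  have e2 : (Aᵀ * Ht) *ᵥ p - (G * Gti) *ᵥ ((Aᵀ * Hi) *ᵥ p) = 0 := by
    rw [auxI0 (G := G) (Gt := Gt) (Gti := Gti) (Hi := Hi) (Ht := Ht) (A := A) h5 hG hHt,
      Matrix.mulVec_mulVec]
    simp only [Matrix.mul_assoc, sub_self]
  rw [Matrix.mulVec_sub]
  linear_combination (norm := abel) e1 + e2

include h1 h3 h6 hG hHt in
lemma eq6M (d : N → ℝ) (p : K → ℝ) :
    (A * Gti) *ᵥ (d - (Aᵀ * Hi) *ᵥ p) + (Hm * Ht) *ᵥ (p - (A * Gi) *ᵥ d) = p := by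
  have i4 := auxI4 (Gti := Gti) (Hm := Hm) (Hi := Hi) (Ht := Ht) (A := A) h3 hHt
  have i6 := auxI6 (G := G) (Gi := Gi) (Gt := Gt) (Gti := Gti) (Hm := Hm) (Hi := Hi)
    (Ht := Ht) (A := A) h1 h3 h6 hG hHt
  have e1 : (Hm * Ht) *ᵥ ((A * Gi) *ᵥ d) = (A * Gti) *ᵥ d := by
    rw [Matrix.mulVec_mulVec, ← Matrix.mul_assoc, i6]
  rw [Matrix.mulVec_sub, Matrix.mulVec_sub, e1, i4]
  simp only [Matrix.add_mulVec, Matrix.one_mulVec, ← Matrix.mulVec_mulVec, Matrix.mul_assoc]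
  abel

end helpers
end Mat

open Matrix in
set_option maxHeartbeats 3200000 in
/-- The arrays defined by the explicit formulas for the quantum Levi-Civita connection on
the product of spacetime and the fuzzy sphere satisfy the torsion-free symmetry conditions
and all six metric-compatibility equations. -/
theorem stmt1 (n : ℕ) (hn : 1 ≤ n)
    (g ginv : Fin n → Fin n → ℝ)
    (h hinv : Fin 3 → Fin 3 → ℝ)
    (A : Fin 3 → Fin n → ℝ)
    (Dg : Fin n → Fin n → Fin n → ℝ)
    (Dh : Fin n → Fin 3 → Fin 3 → ℝ)
    (DA : Fin n → Fin 3 → Fin n → ℝ)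
    (hg_symm : ∀ μ ν, g μ ν = g ν μ)
    (hh_symm : ∀ i j, h i j = h j i)
    (hg_inv : ∀ μ ν, ∑ ρ, g μ ρ * ginv ρ ν = if μ = ν then 1 else 0)
    (hg_inv' : ∀ μ ν, ∑ ρ, ginv μ ρ * g ρ ν = if μ = ν then 1 else 0)
    (hh_inv : ∀ i j, ∑ k, h i k * hinv k j = if i = j then 1 else 0)
    (hh_inv' : ∀ i j, ∑ k, hinv i k * h k j = if i = j then 1 else 0)
    (hDg_symm : ∀ α β γ, Dg α β γ = Dg α γ β)
    (hDh_symm : ∀ α i j, Dh α i j = Dh α j i)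
    -- the effective metric g̃ and its inverse
    (gt gtinv : Fin n → Fin n → ℝ)
    (hgt : ∀ μ ν, gt μ ν = g μ ν - ∑ i, ∑ j, hinv i j * A i μ * A j ν)
    (hgt_inv : ∀ μ ν, ∑ ρ, gt μ ρ * gtinv ρ ν = if μ = ν then 1 else 0)
    (hgt_inv' : ∀ μ ν, ∑ ρ, gtinv μ ρ * gt ρ ν = if μ = ν then 1 else 0)
    -- h̃^{ij}
    (ht : Fin 3 → Fin 3 → ℝ)
    (hht : ∀ i j, ht i j = hinv i j
        + ∑ k, ∑ l, ∑ μ, ∑ ν, hinv i k * hinv l j * gtinv μ ν * A k ν * A l μ)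
    -- Dg̃ and Γ̃
    (Dgt : Fin n → Fin n → Fin n → ℝ)
    (hDgt : ∀ α μ ν, Dgt α μ ν = Dg α μ ν
        + (∑ i, ∑ j, ∑ k, ∑ l, hinv i k * hinv j l * Dh α k l * A i μ * A j ν)
        - ∑ i, ∑ j, hinv i j * (DA α i μ * A j ν + A i μ * DA α j ν))
    (Γt : Fin n → Fin n → Fin n → ℝ)
    (hΓt : ∀ σ μ ν, Γt σ μ ν = (1/2) * ∑ ρ, gtinv σ ρ * (Dgt μ ν ρ + Dgt ν μ ρ - Dgt ρ μ ν))
    -- C_{α,β}{}^i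
    (C : Fin n → Fin n → Fin 3 → ℝ)
    (hC : ∀ α β i, C α β i = (∑ j, hinv i j * DA α j β)
        - ∑ j, ∑ k, ∑ l, A j β * hinv i k * hinv j l * Dh α k l)
    -- the connection coefficients defined by the explicit formulas
    (Γ : Fin n → Fin n → Fin n → ℝ)
    (F : Fin n → Fin n → Fin 3 → ℝ)
    (D : Fin n → Fin 3 → Fin 3 → ℝ)
    (E : Fin 3 → Fin n → Fin n → ℝ)
    (B : Fin 3 → Fin n → Fin 3 → ℝ)
    (H : Fin 3 → Fin 3 → Fin 3 → ℝ)
    (hΓ : ∀ σ μ ν, Γ σ μ ν = Γt σ μ ν + (1/2) * ∑ ρ, gtinv σ ρ *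
        ((∑ i, A i μ * (C ν ρ i - C ρ ν i)) + (∑ i, A i ν * (C μ ρ i - C ρ μ i))
          - ∑ i, ∑ j, ∑ k, ∑ l, A i μ * A j ν * hinv i k * hinv j l * Dh ρ k l))
    (hE : ∀ k α β, E k α β = -(1/2) * ∑ i, hinv k i *
        (DA α i β + DA β i α - 2 * ∑ μ, A i μ * Γ μ α β))
    (hF : ∀ μ' α i, F μ' α i = (1/2) * ∑ β, gtinv β μ' *
        (-(DA α i β - DA β i α)
          + ∑ j, ∑ k, hinv j k * A k β * (Dh α i j - ∑ l, A l α * eps i j l)))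
    (hB : ∀ k α i, B k α i = (1/2) * ∑ j, ht j k *
        ((∑ μ, ∑ β, ginv μ β * A j μ * (DA α i β - DA β i α))
          + (∑ l, A l α * eps i j l) - Dh α i j))
    (hD : ∀ μ' i j, D μ' i j = (1/2) * ∑ α, gtinv μ' α *
        (Dh α i j - ∑ k, ∑ m, A k α * hinv m k *
            ((∑ n', h n' i * eps j m n') + ∑ n', h n' j * eps i m n')))
    (hH : ∀ l' i k, H l' i k = (1/2) * (∑ j, ht j l' *
        ((∑ n', h n' i * eps k j n') + (∑ n', h n' k * eps i j n')
          - ∑ μ, ∑ α, A j μ * ginv μ α * Dh α i k)) - (1/2) * eps l' i k) :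
    -- torsion-free symmetry conditions
    (∀ μ α β, Γ μ α β = Γ μ β α) ∧
    (∀ μ i j, D μ i j = D μ j i) ∧
    (∀ i α β, E i α β = E i β α) ∧
    (∀ i j k, H i j k - H i k j + eps i j k = 0) ∧
    -- the six metric-compatibility equations
    (∀ α β γ, Dg α β γ - (∑ μ, g μ γ * Γ μ α β) - (∑ μ, g β μ * Γ μ α γ)
        + (∑ i, A i γ * E i α β) + (∑ i, A i β * E i α γ) = 0) ∧
    (∀ α i β, DA α i β - (∑ μ, A i μ * Γ μ α β) + (∑ μ, g β μ * F μ α i)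
        + (∑ k, A k β * B k α i) + (∑ k, h k i * E k α β) = 0) ∧
    (∀ α β i, (∑ μ, g μ β * F μ α i) + (∑ μ, g α μ * F μ β i)
        + (∑ k, A k β * B k α i) + (∑ k, A k α * B k β i) = 0) ∧
    (∀ α i j, Dh α i j + (∑ μ, A i μ * F μ α j) + (∑ μ, A j μ * F μ α i)
        + (∑ k, h k j * B k α i) + (∑ k, h i k * B k α j) = 0) ∧
    (∀ α i j, (∑ μ, g μ α * D μ i j) + (∑ μ, A j μ * F μ α i)
        + (∑ k, A k α * H k i j) + (∑ k, h j k * B k α i) = 0) ∧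
    (∀ i j k, (∑ μ, A j μ * D μ i k) + (∑ μ, A k μ * D μ i j)
        + (∑ l, h l k * H l i j) + (∑ l, h l j * H l i k) = 0) := by
  classical
  -- ===== matrices =====
  set G : Matrix (Fin n) (Fin n) ℝ := Matrix.of g with hmG
  set Gi : Matrix (Fin n) (Fin n) ℝ := Matrix.of ginv with hmGi
  set Gt : Matrix (Fin n) (Fin n) ℝ := Matrix.of gt with hmGt
  set Gti : Matrix (Fin n) (Fin n) ℝ := Matrix.of gtinv with hmGti
  set Hm : Matrix (Fin 3) (Fin 3) ℝ := Matrix.of h with hmHm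
  set Hi : Matrix (Fin 3) (Fin 3) ℝ := Matrix.of hinv with hmHi
  set Htm : Matrix (Fin 3) (Fin 3) ℝ := Matrix.of ht with hmHtm
  set Am : Matrix (Fin 3) (Fin n) ℝ := Matrix.of A with hmAm
  have mGGi : G * Gi = 1 := by
    ext μ ν
    simp only [hmG, hmGi, Matrix.mul_apply, Matrix.of_apply, Matrix.one_apply]
    exact hg_inv μ ν
  have mGiG : Gi * G = 1 := by
    ext μ ν
    simp only [hmG, hmGi, Matrix.mul_apply, Matrix.of_apply, Matrix.one_apply]
    exact hg_inv' μ ν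
  have mGtGti : Gt * Gti = 1 := by
    ext μ ν
    simp only [hmGt, hmGti, Matrix.mul_apply, Matrix.of_apply, Matrix.one_apply]
    exact hgt_inv μ ν
  have mGtiGt : Gti * Gt = 1 := by
    ext μ ν
    simp only [hmGt, hmGti, Matrix.mul_apply, Matrix.of_apply, Matrix.one_apply]
    exact hgt_inv' μ ν
  have mHmHi : Hm * Hi = 1 := by
    ext i j
    simp only [hmHm, hmHi, Matrix.mul_apply, Matrix.of_apply, Matrix.one_apply]
    exact hh_inv i j
  have mHiHm : Hi * Hm = 1 := by
    ext i j
    simp only [hmHm, hmHi, Matrix.mul_apply, Matrix.of_apply, Matrix.one_apply]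
    exact hh_inv' i j
  -- ===== scalar symmetries =====
  have shinv : ∀ i j, hinv i j = hinv j i := by
    have mHsym : Hmᵀ = Hm := by
      ext i j; simp only [hmHm, Matrix.transpose_apply, Matrix.of_apply]; exact hh_symm j i
    have hsy := inv_symm Hm Hi mHmHi mHiHm mHsym
    intro i j
    have e := congrFun (congrFun hsy i) j
    simp only [hmHi, Matrix.transpose_apply, Matrix.of_apply] at e
    exact e.symm
  have sginv : ∀ μ ν, ginv μ ν = ginv ν μ := by
    have mGsym : Gᵀ = G := by
      ext μ ν; simp only [hmG, Matrix.transpose_apply, Matrix.of_apply]; exact hg_symm ν μ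
    have hsy := inv_symm G Gi mGGi mGiG mGsym
    intro μ ν
    have e := congrFun (congrFun hsy μ) ν
    simp only [hmGi, Matrix.transpose_apply, Matrix.of_apply] at e
    exact e.symm
  have sgt : ∀ μ ν, gt μ ν = gt ν μ := by
    intro μ ν
    rw [hgt, hgt, hg_symm]
    congr 1
    rw [Finset.sum_comm]
    exact Finset.sum_congr rfl fun j _ => Finset.sum_congr rfl fun i _ => by
      rw [shinv]; ring
  have sgtinv : ∀ μ ν, gtinv μ ν = gtinv ν μ := by
    have mGtsym : Gtᵀ = Gt := by
      ext μ ν; simp only [hmGt, Matrix.transpose_apply, Matrix.of_apply]; exact sgt ν μ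
    have hsy := inv_symm Gt Gti mGtGti mGtiGt mGtsym
    intro μ ν
    have e := congrFun (congrFun hsy μ) ν
    simp only [hmGti, Matrix.transpose_apply, Matrix.of_apply] at e
    exact e.symm
  have sht : ∀ i j, ht i j = ht j i := by
    intro i j
    rw [hht, hht]
    congr 1
    · exact shinv i j
    · calc ∑ k, ∑ l, ∑ μ, ∑ ν, hinv i k * hinv l j * gtinv μ ν * A k ν * A l μ
          = ∑ l, ∑ k, ∑ ν, ∑ μ, hinv i k * hinv l j * gtinv μ ν * A k ν * A l μ := by
            rw [Finset.sum_comm]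
            exact Finset.sum_congr rfl fun l _ => Finset.sum_congr rfl fun k _ =>
              Finset.sum_comm
        _ = ∑ k, ∑ l, ∑ μ, ∑ ν, hinv j k * hinv l i * gtinv μ ν * A k ν * A l μ := by
            refine Finset.sum_congr rfl fun l _ => Finset.sum_congr rfl fun k _ =>
              Finset.sum_congr rfl fun ν _ => Finset.sum_congr rfl fun μ _ => ?_
            rw [shinv i k, shinv l j, sgtinv μ ν]; ring
  -- ===== remaining matrix facts =====
  have mGt : Gt = G - Amᵀ * Hi * Am := by
    ext μ ν
    simp only [hmGt, hmG, hmAm, hmHi, Matrix.sub_apply, Matrix.mul_apply, Matrix.of_apply,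
      Matrix.transpose_apply, Finset.sum_mul, hgt]
    congr 1
    rw [Finset.sum_comm]
    exact Finset.sum_congr rfl fun j _ => Finset.sum_congr rfl fun i _ => by ring
  have hGma : G = Gt + Amᵀ * Hi * Am := by rw [mGt]; abel
  have mHt : Htm = Hi + Hi * Am * Gti * Amᵀ * Hi := by
    ext i j
    simp only [hmHtm, hmHi, hmAm, hmGti, Matrix.add_apply, Matrix.mul_apply, Matrix.of_apply,
      Matrix.transpose_apply, Finset.sum_mul, hht]
    congr 1
    calc ∑ k, ∑ l, ∑ μ, ∑ ν, hinv i k * hinv l j * gtinv μ ν * A k ν * A l μ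
        = ∑ l, ∑ μ, ∑ ν, ∑ k, hinv i k * hinv l j * gtinv μ ν * A k ν * A l μ :=
          sum_comm₄ _
      _ = ∑ l, ∑ ν, ∑ μ, ∑ k, hinv i k * hinv l j * gtinv ν μ * A k μ * A l ν := by
          refine Finset.sum_congr rfl fun l _ => ?_
          rw [Finset.sum_comm]
      _ = ∑ l, ∑ ν, ∑ μ, ∑ k, (((hinv i k * A k μ) * gtinv μ ν) * A l ν) * hinv l j := by
          refine Finset.sum_congr rfl fun l _ => Finset.sum_congr rfl fun ν _ =>
            Finset.sum_congr rfl fun μ _ => Finset.sum_congr rfl fun k _ => ?_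
          rw [sgtinv μ ν]; ring
  have sDgt : ∀ α μ ν, Dgt α μ ν = Dgt α ν μ := by
    intro α μ ν
    rw [hDgt, hDgt, hDg_symm]
    congr 1
    · congr 1
      calc ∑ i, ∑ j, ∑ k, ∑ l, hinv i k * hinv j l * Dh α k l * A i μ * A j ν
          = ∑ j, ∑ i, ∑ l, ∑ k, hinv i k * hinv j l * Dh α k l * A i μ * A j ν := by
            rw [Finset.sum_comm]
            exact Finset.sum_congr rfl fun j _ => Finset.sum_congr rfl fun i _ =>
              Finset.sum_comm
        _ = ∑ i, ∑ j, ∑ k, ∑ l, hinv i k * hinv j l * Dh α k l * A i ν * A j μ := by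
            refine Finset.sum_congr rfl fun i _ => Finset.sum_congr rfl fun j _ =>
              Finset.sum_congr rfl fun k _ => Finset.sum_congr rfl fun l _ => ?_
            rw [hDh_symm α k l]; ring
    · calc ∑ i, ∑ j, hinv i j * (DA α i μ * A j ν + A i μ * DA α j ν)
          = ∑ j, ∑ i, hinv i j * (DA α i μ * A j ν + A i μ * DA α j ν) := Finset.sum_comm
        _ = ∑ i, ∑ j, hinv i j * (DA α i ν * A j μ + A i ν * DA α j μ) := by
            refine Finset.sum_congr rfl fun x _ => Finset.sum_congr rfl fun y _ => ?_
            rw [shinv y x]; ring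
  have claim1 : ∀ μ α β, Γ μ α β = Γ μ β α := by
    intro σ α β
    rw [hΓ, hΓ]
    have hq : ∀ ρ, (∑ i, ∑ j, ∑ k, ∑ l, A i α * A j β * hinv i k * hinv j l * Dh ρ k l)
        = ∑ i, ∑ j, ∑ k, ∑ l, A i β * A j α * hinv i k * hinv j l * Dh ρ k l := by
      intro ρ
      calc (∑ i, ∑ j, ∑ k, ∑ l, A i α * A j β * hinv i k * hinv j l * Dh ρ k l)
          = ∑ j, ∑ i, ∑ l, ∑ k, A i α * A j β * hinv i k * hinv j l * Dh ρ k l := by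
            rw [Finset.sum_comm]
            exact Finset.sum_congr rfl fun j _ => Finset.sum_congr rfl fun i _ =>
              Finset.sum_comm
        _ = ∑ i, ∑ j, ∑ k, ∑ l, A i β * A j α * hinv i k * hinv j l * Dh ρ k l := by
            refine Finset.sum_congr rfl fun i _ => Finset.sum_congr rfl fun j _ =>
              Finset.sum_congr rfl fun k _ => Finset.sum_congr rfl fun l _ => ?_
            rw [hDh_symm ρ k l]; ring
    have hΓtsym : Γt σ α β = Γt σ β α := by
      rw [hΓt, hΓt]
      congr 1
      refine Finset.sum_congr rfl fun ρ _ => ?_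
      rw [sDgt ρ α β]; ring
    rw [hΓtsym]
    congr 1
    congr 1
    refine Finset.sum_congr rfl fun ρ _ => ?_
    rw [hq ρ]; ring
  have claim2 : ∀ μ i j, D μ i j = D μ j i := by
    intro μ i j
    rw [hD, hD]
    congr 1
    refine Finset.sum_congr rfl fun α _ => ?_
    rw [hDh_symm α i j]
    congr 1
    congr 1
    refine Finset.sum_congr rfl fun k _ => Finset.sum_congr rfl fun m _ => ?_
    ring
  have claim3 : ∀ i α β, E i α β = E i β α := by
    intro i α β
    rw [hE, hE]
    congr 1
    refine Finset.sum_congr rfl fun k _ => ?_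
    have hsw : (∑ μ, A k μ * Γ μ α β) = ∑ μ, A k μ * Γ μ β α :=
      Finset.sum_congr rfl fun μ _ => by rw [claim1 μ α β]
    rw [hsw]; ring
  have claim4 : ∀ i j k, H i j k - H i k j + eps i j k = 0 := by
    intro i j k
    rw [hH i j k, hH i k j]
    have hb : ∀ m, ((∑ n', h n' j * eps k m n') + (∑ n', h n' k * eps j m n')
        - ∑ μ, ∑ α, A m μ * ginv μ α * Dh α j k)
        = ((∑ n', h n' k * eps j m n') + (∑ n', h n' j * eps k m n')
        - ∑ μ, ∑ α, A m μ * ginv μ α * Dh α k j) := by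
      intro m
      have hd : (∑ μ, ∑ α, A m μ * ginv μ α * Dh α j k)
          = ∑ μ, ∑ α, A m μ * ginv μ α * Dh α k j :=
        Finset.sum_congr rfl fun μ _ => Finset.sum_congr rfl fun α _ => by
          rw [hDh_symm α j k]
      rw [hd]; ring
    have hS : (∑ m, ht m i * ((∑ n', h n' j * eps k m n') + (∑ n', h n' k * eps j m n')
        - ∑ μ, ∑ α, A m μ * ginv μ α * Dh α j k))
        = ∑ m, ht m i * ((∑ n', h n' k * eps j m n') + (∑ n', h n' j * eps k m n')
        - ∑ μ, ∑ α, A m μ * ginv μ α * Dh α k j) :=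
      Finset.sum_congr rfl fun m _ => by rw [hb m]
    rw [hS, eps_swap23 i j k]
    ring
  -- ===== W and X matrices =====
  set Wm : Fin n → Matrix (Fin 3) (Fin n) ℝ :=
    fun α => Matrix.of (fun i β => DA α i β - DA β i α) with hWm
  set Xm : Fin n → Matrix (Fin 3) (Fin 3) ℝ :=
    fun α => Matrix.of (fun i j => Dh α i j - ∑ l, A l α * eps i j l) with hXm
  have bF : ∀ α i μ', F μ' α i
      = ((1/2 : ℝ) • ((-(Wm α) + Xm α * (Hi * Am)) * Gti)) i μ' := by
    intro α i μ'
    rw [hF]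
    simp only [hWm, hXm, hmHi, hmAm, hmGti, Matrix.smul_apply, Matrix.mul_apply,
      Matrix.add_apply, Matrix.neg_apply, Matrix.of_apply, smul_eq_mul]
    congr 1
    refine Finset.sum_congr rfl fun β _ => ?_
    have hin : (∑ j, ∑ k, hinv j k * A k β * (Dh α i j - ∑ l, A l α * eps i j l))
        = ∑ j, (Dh α i j - ∑ l, A l α * eps i j l) * ∑ k, hinv j k * A k β := by
      refine Finset.sum_congr rfl fun j _ => ?_
      rw [Finset.mul_sum]
      exact Finset.sum_congr rfl fun k _ => by ring
    rw [hin]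
    ring
  have bB : ∀ α i k', B k' α i
      = ((1/2 : ℝ) • ((Wm α * (Gi * Amᵀ) - Xm α) * Htm)) i k' := by
    intro α i k'
    rw [hB]
    simp only [hWm, hXm, hmGi, hmAm, hmHtm, Matrix.smul_apply, Matrix.mul_apply,
      Matrix.sub_apply, Matrix.of_apply, Matrix.transpose_apply, smul_eq_mul]
    congr 1
    refine Finset.sum_congr rfl fun j _ => ?_
    have hbig : (∑ μ, ∑ β, ginv μ β * A j μ * (DA α i β - DA β i α))
        = ∑ β, (DA α i β - DA β i α) * ∑ μ, ginv β μ * A j μ := by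
      rw [Finset.sum_comm]
      refine Finset.sum_congr rfl fun β _ => ?_
      rw [Finset.mul_sum]
      refine Finset.sum_congr rfl fun μ _ => ?_
      rw [sginv β μ]; ring
    rw [hbig]
    ring
  have i1 : Gi * Amᵀ * Htm = Gti * Amᵀ * Hi :=
    auxI1 (G := G) (Gi := Gi) (Gt := Gt) (Gti := Gti) (Hi := Hi) (Ht := Htm) (A := Am)
      mGiG mGtGti hGma mHt
  have i1' : ∀ {L : Type} (Z : Matrix (Fin 3) L ℝ),
      Gi * (Amᵀ * (Htm * Z)) = Gti * (Amᵀ * (Hi * Z)) := fun {L} Z => by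
    have := congrArg (· * Z) i1
    simpa only [Matrix.mul_assoc] using this
  have mkey2 : ∀ α, ((1/2 : ℝ) • (Wm α))
      + (((1/2 : ℝ) • ((-(Wm α) + Xm α * (Hi * Am)) * Gti)) * G)
      + (((1/2 : ℝ) • ((Wm α * (Gi * Amᵀ) - Xm α) * Htm)) * Am) = 0 := by
    intro α
    have k2 := key2M (G := G) (Gt := Gt) (Gti := Gti) (Hi := Hi) (Ht := Htm) (A := Am)
      mGtiGt hGma mHt (Wm α) (Xm α)
    calc ((1/2 : ℝ) • (Wm α))
        + (((1/2 : ℝ) • ((-(Wm α) + Xm α * (Hi * Am)) * Gti)) * G)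
        + (((1/2 : ℝ) • ((Wm α * (Gi * Amᵀ) - Xm α) * Htm)) * Am)
        = (1/2 : ℝ) • (Wm α + (-(Wm α) + Xm α * (Hi * Am)) * (Gti * G)
            + Wm α * (Gti * (Amᵀ * Hi)) * Am - Xm α * (Htm * Am)) := by
          rw [Matrix.smul_mul, Matrix.smul_mul, ← smul_add, ← smul_add]
          congr 1
          simp only [Matrix.sub_mul, Matrix.mul_assoc, i1']
          abel
      _ = (1/2 : ℝ) • (0 : Matrix (Fin 3) (Fin n) ℝ) := by rw [k2]
      _ = 0 := smul_zero _
  have key2 : ∀ α β i, (1/2)*(DA α i β - DA β i α) + (∑ μ, g β μ * F μ α i)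
      + (∑ k, A k β * B k α i) = 0 := by
    intro α β i
    have hgF : (∑ μ, g β μ * F μ α i)
        = (((1/2 : ℝ) • ((-(Wm α) + Xm α * (Hi * Am)) * Gti)) * G) i β := by
      rw [Matrix.mul_apply]
      refine Finset.sum_congr rfl fun μ _ => ?_
      rw [bF α i μ, hg_symm β μ]
      simp only [hmG, Matrix.of_apply]
      ring
    have hAB : (∑ k, A k β * B k α i)
        = (((1/2 : ℝ) • ((Wm α * (Gi * Amᵀ) - Xm α) * Htm)) * Am) i β := by
      rw [Matrix.mul_apply]
      refine Finset.sum_congr rfl fun k _ => ?_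
      rw [bB α i k]
      simp only [hmAm, Matrix.of_apply]
      ring
    have hW : (1/2)*(DA α i β - DA β i α) = ((1/2 : ℝ) • (Wm α)) i β := by
      simp [hWm, smul_eq_mul]
    rw [hW, hgF, hAB]
    simpa using congrFun (congrFun (mkey2 α) i) β
  have hhE : ∀ α β i, (∑ k, h k i * E k α β)
      = -(1/2) * (DA α i β + DA β i α - 2 * ∑ μ, A i μ * Γ μ α β) := by
    intro α β i
    calc ∑ k, h k i * E k α β
        = ∑ m, (∑ k, h i k * hinv k m)
            * (-(1/2) * (DA α m β + DA β m α - 2 * ∑ μ, A m μ * Γ μ α β)) := by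
          simp only [hE, Finset.mul_sum, Finset.sum_mul]
          rw [Finset.sum_comm]
          refine Finset.sum_congr rfl fun m _ => Finset.sum_congr rfl fun k _ => ?_
          rw [hh_symm k i]; ring
      _ = -(1/2) * (DA α i β + DA β i α - 2 * ∑ μ, A i μ * Γ μ α β) :=
          contract_right hh_inv _ i
  have eq2 : ∀ α i β, DA α i β - (∑ μ, A i μ * Γ μ α β) + (∑ μ, g β μ * F μ α i)
      + (∑ k, A k β * B k α i) + (∑ k, h k i * E k α β) = 0 := by
    intro α i β
    have k := key2 α β i
    have e := hhE α β i
    linarith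
  have eq3 : ∀ α β i, (∑ μ, g μ β * F μ α i) + (∑ μ, g α μ * F μ β i)
      + (∑ k, A k β * B k α i) + (∑ k, A k α * B k β i) = 0 := by
    intro α β i
    have e1 : (∑ μ, g μ β * F μ α i) = ∑ μ, g β μ * F μ α i :=
      Finset.sum_congr rfl fun μ _ => by rw [hg_symm μ β]
    have k1 := key2 α β i
    have k2 := key2 β α i
    linarith
  -- ===== key4 and equation 4 =====
  have mkey4 : ∀ α, ((1/2 : ℝ) • ((-(Wm α) + Xm α * (Hi * Am)) * Gti)) * Amᵀ
      + (((1/2 : ℝ) • ((Wm α * (Gi * Amᵀ) - Xm α) * Htm)) * Hm)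
      = (-(1/2) : ℝ) • Xm α := by
    intro α
    have k4 := key4M (Gti := Gti) (Hm := Hm) (Hi := Hi) (Ht := Htm) (A := Am)
      mHiHm mHt (Wm α) (Xm α)
    have hbr : (-(Wm α) + Xm α * (Hi * Am)) * (Gti * Amᵀ)
        + ((Wm α * (Gi * Amᵀ)) * Htm * Hm - Xm α * (Htm * Hm)) = -(Xm α) := by
      calc (-(Wm α) + Xm α * (Hi * Am)) * (Gti * Amᵀ)
          + ((Wm α * (Gi * Amᵀ)) * Htm * Hm - Xm α * (Htm * Hm))
          = (-(Wm α) + Xm α * (Hi * Am)) * (Gti * Amᵀ)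
            + Wm α * (Gti * (Amᵀ * Hi)) * Hm - Xm α * (Htm * Hm) := by
            simp only [Matrix.mul_assoc, i1']
            abel
        _ = -(Xm α) := k4
    calc ((1/2 : ℝ) • ((-(Wm α) + Xm α * (Hi * Am)) * Gti)) * Amᵀ
        + (((1/2 : ℝ) • ((Wm α * (Gi * Amᵀ) - Xm α) * Htm)) * Hm)
        = (1/2 : ℝ) • ((-(Wm α) + Xm α * (Hi * Am)) * (Gti * Amᵀ)
            + ((Wm α * (Gi * Amᵀ)) * Htm * Hm - Xm α * (Htm * Hm))) := by
          rw [Matrix.smul_mul, Matrix.smul_mul, ← smul_add]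
          congr 1
          simp only [Matrix.sub_mul, Matrix.mul_assoc]
      _ = (1/2 : ℝ) • (-(Xm α)) := by rw [hbr]
      _ = (-(1/2) : ℝ) • Xm α := by rw [smul_neg, ← neg_smul]
  have key4 : ∀ α i j, (∑ μ, A j μ * F μ α i) + (∑ k, h k j * B k α i)
      = (1/2) * ((∑ l, A l α * eps i j l) - Dh α i j) := by
    intro α i j
    have hAF : (∑ μ, A j μ * F μ α i)
        = (((1/2 : ℝ) • ((-(Wm α) + Xm α * (Hi * Am)) * Gti)) * Amᵀ) i j := by
      rw [Matrix.mul_apply]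
      refine Finset.sum_congr rfl fun μ _ => ?_
      rw [bF α i μ]
      simp only [hmAm, Matrix.of_apply, Matrix.transpose_apply]
      ring
    have hhB : (∑ k, h k j * B k α i)
        = ((((1/2 : ℝ) • ((Wm α * (Gi * Amᵀ) - Xm α) * Htm))) * Hm) i j := by
      rw [Matrix.mul_apply]
      refine Finset.sum_congr rfl fun k _ => ?_
      rw [bB α i k]
      simp only [hmHm, Matrix.of_apply]
      ring
    have hR : (1/2) * ((∑ l, A l α * eps i j l) - Dh α i j)
        = ((-(1/2) : ℝ) • Xm α) i j := by
      simp only [hXm, Matrix.smul_apply, Matrix.of_apply, smul_eq_mul]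
      ring
    rw [hAF, hhB, hR]
    simpa using congrFun (congrFun (mkey4 α) i) j
  have eq4 : ∀ α i j, Dh α i j + (∑ μ, A i μ * F μ α j) + (∑ μ, A j μ * F μ α i)
      + (∑ k, h k j * B k α i) + (∑ k, h i k * B k α j) = 0 := by
    intro α i j
    have e1 := key4 α i j
    have e2 := key4 α j i
    have e3 : (∑ k, h i k * B k α j) = ∑ k, h k i * B k α j :=
      Finset.sum_congr rfl fun k _ => by rw [hh_symm i k]
    have e4 : Dh α j i = Dh α i j := (hDh_symm α i j).symm
    have e5 : (∑ l, A l α * eps j i l) = -∑ l, A l α * eps i j l := by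
      rw [← Finset.sum_neg_distrib]
      refine Finset.sum_congr rfl fun l _ => ?_
      rw [eps_swap12 j i l]; ring
    rw [e4, e5] at e2
    linarith
  -- ===== bridges for D and H =====
  have mvapp : ∀ {I J : Type} [Fintype J] (M : Matrix I J ℝ) (v : J → ℝ) (a : I),
      (M *ᵥ v) a = ∑ b, M a b * v b := fun M v a => rfl
  have bD : ∀ i j μ', D μ' i j
      = ((1/2 : ℝ) • (Gti *ᵥ ((fun ρ => Dh ρ i j)
          - (Amᵀ * Hi) *ᵥ (fun m => (∑ n', h n' i * eps j m n')
            + ∑ n', h n' j * eps i m n')))) μ' := by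
    intro i j μ'
    rw [hD]
    simp only [Pi.smul_apply, smul_eq_mul, Matrix.mulVec, dotProduct, Pi.sub_apply,
      Matrix.mul_apply, Matrix.transpose_apply, Matrix.of_apply, hmGti, hmAm, hmHi]
    congr 1
    refine Finset.sum_congr rfl fun ρ _ => ?_
    have hin : (∑ k, ∑ m, A k ρ * hinv m k * ((∑ n', h n' i * eps j m n')
        + ∑ n', h n' j * eps i m n'))
        = ∑ m, (∑ k, A k ρ * hinv k m) * ((∑ n', h n' i * eps j m n')
          + ∑ n', h n' j * eps i m n') := by
      rw [Finset.sum_comm]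
      refine Finset.sum_congr rfl fun m _ => ?_
      rw [Finset.sum_mul]
      exact Finset.sum_congr rfl fun k _ => by rw [shinv m k]
    rw [hin]
  have bH : ∀ i j k', H k' i j
      = ((1/2 : ℝ) • (Htm *ᵥ ((fun m => (∑ n', h n' i * eps j m n')
            + ∑ n', h n' j * eps i m n')
          - (Am * Gi) *ᵥ (fun ρ => Dh ρ i j)))
        - (1/2 : ℝ) • (fun l => eps l i j)) k' := by
    intro i j k'
    rw [hH]
    simp only [Pi.sub_apply, Pi.smul_apply, smul_eq_mul, Matrix.mulVec, dotProduct,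
      Matrix.mul_apply, Matrix.of_apply, hmHtm, hmAm, hmGi]
    congr 1
    congr 1
    refine Finset.sum_congr rfl fun m _ => ?_
    rw [sht m k']
    have hin2 : (∑ μ, ∑ ρ, A m μ * ginv μ ρ * Dh ρ i j)
        = ∑ ρ, (∑ μ, A m μ * ginv μ ρ) * Dh ρ i j := by
      rw [Finset.sum_comm]
      refine Finset.sum_congr rfl fun ρ _ => ?_
      rw [Finset.sum_mul]
    rw [hin2]
  -- ===== equation 5 =====
  have mR : ∀ (d : Fin n → ℝ) (p e : Fin 3 → ℝ),
      G *ᵥ ((1/2 : ℝ) • (Gti *ᵥ (d - (Amᵀ * Hi) *ᵥ p)))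
      + Amᵀ *ᵥ ((1/2 : ℝ) • (Htm *ᵥ (p - (Am * Gi) *ᵥ d)) - (1/2 : ℝ) • e)
      = (1/2 : ℝ) • d - (1/2 : ℝ) • (Amᵀ *ᵥ e) := by
    intro d p e
    have m5 := eq5M (G := G) (Gi := Gi) (Gt := Gt) (Gti := Gti) (Hi := Hi) (Ht := Htm)
      (A := Am) mGGi mGtGti mGtiGt hGma mHt d p
    calc G *ᵥ ((1/2 : ℝ) • (Gti *ᵥ (d - (Amᵀ * Hi) *ᵥ p)))
        + Amᵀ *ᵥ ((1/2 : ℝ) • (Htm *ᵥ (p - (Am * Gi) *ᵥ d)) - (1/2 : ℝ) • e)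
        = (1/2 : ℝ) • ((G * Gti) *ᵥ (d - (Amᵀ * Hi) *ᵥ p) + (Amᵀ * Htm) *ᵥ p
            - (Amᵀ * Htm * Am * Gi) *ᵥ d) - (1/2 : ℝ) • (Amᵀ *ᵥ e) := by
          simp only [Matrix.mulVec_sub, Matrix.mulVec_smul, Matrix.mulVec_mulVec,
            smul_sub, smul_add, Matrix.mul_assoc]
          abel
      _ = (1/2 : ℝ) • d - (1/2 : ℝ) • (Amᵀ *ᵥ e) := by rw [m5]
  have eq5 : ∀ α i j, (∑ μ, g μ α * D μ i j) + (∑ μ, A j μ * F μ α i)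
      + (∑ k, A k α * H k i j) + (∑ k, h j k * B k α i) = 0 := by
    intro α i j
    have e1 := key4 α i j
    have e3 : (∑ k, h j k * B k α i) = ∑ k, h k j * B k α i :=
      Finset.sum_congr rfl fun k _ => by rw [hh_symm j k]
    have hgD : (∑ μ, g μ α * D μ i j)
        = (G *ᵥ ((1/2 : ℝ) • (Gti *ᵥ ((fun ρ => Dh ρ i j)
          - (Amᵀ * Hi) *ᵥ (fun m => (∑ n', h n' i * eps j m n')
            + ∑ n', h n' j * eps i m n'))))) α := by
      rw [mvapp]
      refine Finset.sum_congr rfl fun μ _ => ?_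
      rw [hg_symm μ α, bD i j μ]
      simp only [hmG, Matrix.of_apply]
    have hAH : (∑ k, A k α * H k i j)
        = (Amᵀ *ᵥ ((1/2 : ℝ) • (Htm *ᵥ ((fun m => (∑ n', h n' i * eps j m n')
            + ∑ n', h n' j * eps i m n')
          - (Am * Gi) *ᵥ (fun ρ => Dh ρ i j)))
        - (1/2 : ℝ) • (fun l => eps l i j))) α := by
      rw [mvapp]
      refine Finset.sum_congr rfl fun k _ => ?_
      rw [bH i j k]
      simp only [hmAm, Matrix.of_apply, Matrix.transpose_apply]
    have he : (Amᵀ *ᵥ (fun l => eps l i j)) α = ∑ l, A l α * eps i j l := by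
      rw [mvapp]
      refine Finset.sum_congr rfl fun l _ => ?_
      simp only [hmAm, Matrix.of_apply, Matrix.transpose_apply]
      rw [show eps l i j = eps i j l from (eps_cyclic i j l).symm]
    have hmR := congrFun (mR (fun ρ => Dh ρ i j) (fun m => (∑ n', h n' i * eps j m n')
            + ∑ n', h n' j * eps i m n') (fun l => eps l i j)) α
    simp only [Pi.add_apply, Pi.sub_apply, Pi.smul_apply, smul_eq_mul] at hmR
    rw [he] at hmR
    rw [hgD, hAH]
    linarith
  -- ===== equation 6 =====
  have mY : ∀ (d : Fin n → ℝ) (p e : Fin 3 → ℝ),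
      Am *ᵥ ((1/2 : ℝ) • (Gti *ᵥ (d - (Amᵀ * Hi) *ᵥ p)))
      + Hm *ᵥ ((1/2 : ℝ) • (Htm *ᵥ (p - (Am * Gi) *ᵥ d)) - (1/2 : ℝ) • e)
      = (1/2 : ℝ) • p - (1/2 : ℝ) • (Hm *ᵥ e) := by
    intro d p e
    have m6 := eq6M (G := G) (Gi := Gi) (Gt := Gt) (Gti := Gti) (Hm := Hm) (Hi := Hi)
      (Ht := Htm) (A := Am) mGGi mHmHi mGtiGt hGma mHt d p
    calc Am *ᵥ ((1/2 : ℝ) • (Gti *ᵥ (d - (Amᵀ * Hi) *ᵥ p)))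
        + Hm *ᵥ ((1/2 : ℝ) • (Htm *ᵥ (p - (Am * Gi) *ᵥ d)) - (1/2 : ℝ) • e)
        = (1/2 : ℝ) • ((Am * Gti) *ᵥ (d - (Amᵀ * Hi) *ᵥ p)
            + (Hm * Htm) *ᵥ (p - (Am * Gi) *ᵥ d)) - (1/2 : ℝ) • (Hm *ᵥ e) := by
          simp only [Matrix.mulVec_sub, Matrix.mulVec_smul, Matrix.mulVec_mulVec,
            smul_sub, smul_add, Matrix.mul_assoc]
          abel
      _ = (1/2 : ℝ) • p - (1/2 : ℝ) • (Hm *ᵥ e) := by rw [m6]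
  have eq6 : ∀ i j k, (∑ μ, A j μ * D μ i k) + (∑ μ, A k μ * D μ i j)
      + (∑ l, h l k * H l i j) + (∑ l, h l j * H l i k) = 0 := by
    intro i j k
    have Y : ∀ a b c, (∑ μ, A c μ * D μ a b) + (∑ l, h c l * H l a b)
        = (1/2) * ((∑ n', h n' a * eps b c n') + ∑ n', h n' b * eps a c n')
          - (1/2) * ∑ l, h c l * eps l a b := by
      intro a b c
      have hAD : (∑ μ, A c μ * D μ a b)
          = (Am *ᵥ ((1/2 : ℝ) • (Gti *ᵥ ((fun ρ => Dh ρ a b)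
            - (Amᵀ * Hi) *ᵥ (fun m => (∑ n', h n' a * eps b m n')
              + ∑ n', h n' b * eps a m n'))))) c := by
        rw [mvapp]
        refine Finset.sum_congr rfl fun μ _ => ?_
        rw [bD a b μ]
        simp only [hmAm, Matrix.of_apply]
      have hhH : (∑ l, h c l * H l a b)
          = (Hm *ᵥ ((1/2 : ℝ) • (Htm *ᵥ ((fun m => (∑ n', h n' a * eps b m n')
              + ∑ n', h n' b * eps a m n')
            - (Am * Gi) *ᵥ (fun ρ => Dh ρ a b)))
          - (1/2 : ℝ) • (fun l => eps l a b))) c := by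
        rw [mvapp]
        refine Finset.sum_congr rfl fun l _ => ?_
        rw [bH a b l]
        simp only [hmHm, Matrix.of_apply]
      have he : (Hm *ᵥ (fun l => eps l a b)) c = ∑ l, h c l * eps l a b := by
        rw [mvapp]
        refine Finset.sum_congr rfl fun l _ => ?_
        simp only [hmHm, Matrix.of_apply]
      have hmY := congrFun (mY (fun ρ => Dh ρ a b) (fun m => (∑ n', h n' a * eps b m n')
              + ∑ n', h n' b * eps a m n') (fun l => eps l a b)) c
      simp only [Pi.add_apply, Pi.sub_apply, Pi.smul_apply, smul_eq_mul] at hmY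
      rw [he] at hmY
      rw [hAD, hhH]
      linarith
    have y1 := Y i k j
    have y2 := Y i j k
    have b1 : (∑ l, h l k * H l i j) = ∑ l, h k l * H l i j :=
      Finset.sum_congr rfl fun l _ => by rw [hh_symm l k]
    have b2 : (∑ l, h l j * H l i k) = ∑ l, h j l * H l i k :=
      Finset.sum_congr rfl fun l _ => by rw [hh_symm l j]
    have e0 : ∀ x, h x i * eps k j x + h x k * eps i j x
        + (h x i * eps j k x + h x j * eps i k x)
        - h j x * eps x i k - h k x * eps x i j = 0 := by
      intro x
      rw [hh_symm j x, hh_symm k x, eps_swap12 k j x,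
        show eps x i k = eps i k x from (eps_cyclic i k x).symm,
        show eps x i j = eps i j x from (eps_cyclic i j x).symm]
      ring
    have esum := Finset.sum_congr rfl (fun x (_ : x ∈ Finset.univ) => e0 x)
    simp only [Finset.sum_add_distrib, Finset.sum_sub_distrib, Finset.sum_const_zero] at esum
    linarith
  -- ===== equation 1 =====
  have hΓcomb : ∀ σ α β, Γ σ α β = ∑ ρ, gtinv σ ρ * ((1/2) * ((Dgt α β ρ + Dgt β α ρ - Dgt ρ α β)
      + ((∑ i, A i α * (C β ρ i - C ρ β i)) + (∑ i, A i β * (C α ρ i - C ρ α i))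
        - ∑ i, ∑ j, ∑ k, ∑ l, A i α * A j β * hinv i k * hinv j l * Dh ρ k l))) := by
    intro σ α β
    rw [hΓ, hΓt, Finset.mul_sum, Finset.mul_sum, ← Finset.sum_add_distrib]
    exact Finset.sum_congr rfl fun ρ _ => by ring
  have hgtΓ : ∀ α β γ, (∑ μ, gt μ γ * Γ μ α β)
      = (1/2) * ((Dgt α β γ + Dgt β α γ - Dgt γ α β)
        + ((∑ i, A i α * (C β γ i - C γ β i)) + (∑ i, A i β * (C α γ i - C γ α i))
          - ∑ i, ∑ j, ∑ k, ∑ l, A i α * A j β * hinv i k * hinv j l * Dh γ k l)) := by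
    intro α β γ
    calc ∑ μ, gt μ γ * Γ μ α β
        = ∑ ρ, (∑ μ, gt γ μ * gtinv μ ρ) * ((1/2) * ((Dgt α β ρ + Dgt β α ρ - Dgt ρ α β)
            + ((∑ i, A i α * (C β ρ i - C ρ β i)) + (∑ i, A i β * (C α ρ i - C ρ α i))
              - ∑ i, ∑ j, ∑ k, ∑ l, A i α * A j β * hinv i k * hinv j l * Dh ρ k l))) := by
          simp only [hΓcomb, Finset.mul_sum]
          rw [Finset.sum_comm]
          refine Finset.sum_congr rfl fun ρ _ => ?_
          rw [Finset.sum_mul]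
          refine Finset.sum_congr rfl fun μ _ => ?_
          rw [sgt γ μ]; ring
      _ = _ := contract_right hgt_inv _ γ
  have hAE2 : ∀ α β γ, (∑ i, A i γ * E i α β)
      = -(1/2) * (∑ i, ∑ k, A i γ * hinv i k * (DA α k β + DA β k α))
        + ∑ μ, (∑ i, ∑ k, A i γ * hinv i k * A k μ) * Γ μ α β := by
    intro α β γ
    calc ∑ i, A i γ * E i α β
        = ∑ i, ∑ k, (-(1/2) * (A i γ * hinv i k * (DA α k β + DA β k α))
            + ∑ μ, A i γ * hinv i k * A k μ * Γ μ α β) := by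
          refine Finset.sum_congr rfl fun i _ => ?_
          rw [hE]
          rw [show ∀ (c : ℝ) (f : Fin 3 → ℝ), A i γ * (c * ∑ k, f k) = ∑ k, A i γ * (c * f k)
            from fun c f => by rw [Finset.mul_sum, Finset.mul_sum]]
          refine Finset.sum_congr rfl fun k _ => ?_
          rw [show (∑ μ, A i γ * hinv i k * A k μ * Γ μ α β)
              = A i γ * hinv i k * ∑ μ, A k μ * Γ μ α β from by
            rw [Finset.mul_sum]; exact Finset.sum_congr rfl fun μ _ => by ring]
          ring
      _ = (∑ i, ∑ k, -(1/2) * (A i γ * hinv i k * (DA α k β + DA β k α)))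
          + ∑ i, ∑ k, ∑ μ, A i γ * hinv i k * A k μ * Γ μ α β := by
          simp only [Finset.sum_add_distrib]
      _ = -(1/2) * (∑ i, ∑ k, A i γ * hinv i k * (DA α k β + DA β k α))
          + ∑ μ, (∑ i, ∑ k, A i γ * hinv i k * A k μ) * Γ μ α β := by
          congr 1
          · simp only [← Finset.mul_sum]
          · rw [sum_comm₃, sum_comm₃]
            refine Finset.sum_congr rfl fun μ _ => ?_
            rw [Finset.sum_mul]
            refine Finset.sum_congr rfl fun i _ => ?_
            rw [Finset.sum_mul]
  have haa : ∀ μ γ, (∑ i, ∑ j, hinv i j * A i μ * A j γ) = ∑ i, ∑ k, A i γ * hinv i k * A k μ := by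
    intro μ γ
    rw [Finset.sum_comm]
    refine Finset.sum_congr rfl fun x _ => Finset.sum_congr rfl fun y _ => ?_
    rw [shinv y x]; ring
  have hgG : ∀ α β γ, (∑ μ, g μ γ * Γ μ α β) = (∑ μ, gt μ γ * Γ μ α β)
      + ∑ μ, (∑ i, ∑ k, A i γ * hinv i k * A k μ) * Γ μ α β := by
    intro α β γ
    rw [← Finset.sum_add_distrib]
    refine Finset.sum_congr rfl fun μ _ => ?_
    rw [hgt μ γ, ← haa μ γ]
    ring
  have e_AC : ∀ ρ β' γ', (∑ i, A i β' * C ρ γ' i)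
      = (∑ i, ∑ j, hinv i j * A i β' * DA ρ j γ')
        - ∑ i, ∑ j, ∑ k, ∑ l, hinv i k * hinv j l * A i β' * A j γ' * Dh ρ k l := by
    intro ρ b c
    calc ∑ i, A i b * C ρ c i
        = ∑ i, ((∑ j, A i b * (hinv i j * DA ρ j c))
            - ∑ j, ∑ k, ∑ l, A i b * (A j c * hinv i k * hinv j l * Dh ρ k l)) := by
          refine Finset.sum_congr rfl fun i _ => ?_
          rw [hC, mul_sub]
          simp only [Finset.mul_sum]
      _ = (∑ i, ∑ j, A i b * (hinv i j * DA ρ j c))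
            - ∑ i, ∑ j, ∑ k, ∑ l, A i b * (A j c * hinv i k * hinv j l * Dh ρ k l) := by
          rw [Finset.sum_sub_distrib]
      _ = (∑ i, ∑ j, hinv i j * A i b * DA ρ j c)
            - ∑ i, ∑ j, ∑ k, ∑ l, hinv i k * hinv j l * A i b * A j c * Dh ρ k l := by
          congr 1
          · exact Finset.sum_congr rfl fun i _ => Finset.sum_congr rfl fun j _ => by ring
          · refine Finset.sum_congr rfl fun i _ => Finset.sum_congr rfl fun j _ =>
              Finset.sum_congr rfl fun k _ => Finset.sum_congr rfl fun l _ => ?_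
            ring
  have e_dgt : ∀ α β γ, Dgt α β γ = Dg α β γ
      + (∑ i, ∑ j, ∑ k, ∑ l, hinv i k * hinv j l * A i β * A j γ * Dh α k l)
      - (∑ i, ∑ j, hinv i j * A i γ * DA α j β)
      - (∑ i, ∑ j, hinv i j * A i β * DA α j γ) := by
    intro α β γ
    rw [hDgt]
    have h1 : (∑ i, ∑ j, ∑ k, ∑ l, hinv i k * hinv j l * Dh α k l * A i β * A j γ)
        = ∑ i, ∑ j, ∑ k, ∑ l, hinv i k * hinv j l * A i β * A j γ * Dh α k l :=
      Finset.sum_congr rfl fun i _ => Finset.sum_congr rfl fun j _ =>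
        Finset.sum_congr rfl fun k _ => Finset.sum_congr rfl fun l _ => by ring
    have h2 : (∑ i, ∑ j, hinv i j * (DA α i β * A j γ + A i β * DA α j γ))
        = (∑ i, ∑ j, hinv i j * A i γ * DA α j β)
          + ∑ i, ∑ j, hinv i j * A i β * DA α j γ := by
      calc (∑ i, ∑ j, hinv i j * (DA α i β * A j γ + A i β * DA α j γ))
          = ∑ i, ∑ j, (hinv i j * DA α i β * A j γ + hinv i j * A i β * DA α j γ) :=
            Finset.sum_congr rfl fun i _ => Finset.sum_congr rfl fun j _ => by ring
        _ = (∑ i, ∑ j, hinv i j * DA α i β * A j γ)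
            + ∑ i, ∑ j, hinv i j * A i β * DA α j γ := by
            simp only [Finset.sum_add_distrib]
        _ = (∑ i, ∑ j, hinv i j * A i γ * DA α j β)
            + ∑ i, ∑ j, hinv i j * A i β * DA α j γ := by
            congr 1
            rw [Finset.sum_comm]
            refine Finset.sum_congr rfl fun x _ => Finset.sum_congr rfl fun y _ => ?_
            rw [shinv y x]; ring
    rw [h1, h2]; ring
  have qsym2 : ∀ ρ b c, (∑ i, ∑ j, ∑ k, ∑ l, hinv i k * hinv j l * A i b * A j c * Dh ρ k l)
      = ∑ i, ∑ j, ∑ k, ∑ l, hinv i k * hinv j l * A i c * A j b * Dh ρ k l := by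
    intro ρ b c
    calc (∑ i, ∑ j, ∑ k, ∑ l, hinv i k * hinv j l * A i b * A j c * Dh ρ k l)
        = ∑ j, ∑ i, ∑ l, ∑ k, hinv i k * hinv j l * A i b * A j c * Dh ρ k l := by
          rw [Finset.sum_comm]
          exact Finset.sum_congr rfl fun j _ => Finset.sum_congr rfl fun i _ =>
            Finset.sum_comm
      _ = ∑ x, ∑ y, ∑ z, ∑ w, hinv x z * hinv y w * A x c * A y b * Dh ρ z w := by
          refine Finset.sum_congr rfl fun x _ => Finset.sum_congr rfl fun y _ =>
            Finset.sum_congr rfl fun z _ => Finset.sum_congr rfl fun w _ => ?_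
          rw [hDh_symm ρ w z]; ring
  have qreorder : ∀ ρ b c, (∑ i, ∑ j, ∑ k, ∑ l,
        A i b * A j c * hinv i k * hinv j l * Dh ρ k l)
      = ∑ i, ∑ j, ∑ k, ∑ l, hinv i k * hinv j l * A i b * A j c * Dh ρ k l :=
    fun ρ b c => Finset.sum_congr rfl fun i _ => Finset.sum_congr rfl fun j _ =>
      Finset.sum_congr rfl fun k _ => Finset.sum_congr rfl fun l _ => by ring
  have sC : ∀ (x u v : Fin n), (∑ i, A i x * (C u v i - C v u i))
      = (∑ i, A i x * C u v i) - ∑ i, A i x * C v u i := by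
    intro x u v
    rw [← Finset.sum_sub_distrib]
    exact Finset.sum_congr rfl fun i _ => by ring
  have hlam : ∀ (ρ σ x : Fin n), (∑ i, ∑ k, A i x * hinv i k * (DA ρ k σ + DA σ k ρ))
      = (∑ i, ∑ j, hinv i j * A i x * DA ρ j σ)
        + ∑ i, ∑ j, hinv i j * A i x * DA σ j ρ := by
    intro ρ σ x
    calc (∑ i, ∑ k, A i x * hinv i k * (DA ρ k σ + DA σ k ρ))
        = ∑ i, ∑ k, (hinv i k * A i x * DA ρ k σ + hinv i k * A i x * DA σ k ρ) :=
          Finset.sum_congr rfl fun i _ => Finset.sum_congr rfl fun k _ => by ring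
      _ = _ := by simp only [Finset.sum_add_distrib]
  have eq1 : ∀ α β γ, Dg α β γ - (∑ μ, g μ γ * Γ μ α β) - (∑ μ, g β μ * Γ μ α γ)
      + (∑ i, A i γ * E i α β) + (∑ i, A i β * E i α γ) = 0 := by
    intro α β γ
    have t1 : (∑ μ, g β μ * Γ μ α γ) = ∑ μ, g μ β * Γ μ α γ :=
      Finset.sum_congr rfl fun μ _ => by rw [hg_symm β μ]
    rw [t1, hgG α β γ, hgG α γ β, hAE2 α β γ, hAE2 α γ β, hgtΓ α β γ, hgtΓ α γ β]
    simp only [sC, e_AC, qreorder, e_dgt, hlam]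
    linarith [qsym2 α β γ, qsym2 γ α β, qsym2 β α γ, qsym2 α γ β, qsym2 γ β α,
      qsym2 β γ α, hDg_symm α β γ]
  exact ⟨claim1, claim2, claim3, claim4, eq1, eq2, eq3, eq4, eq5, eq6⟩
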